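/- For indices i, j ∈ {1,…,n}, if agent i reaches agent j through B, then λ_{ij} > 0, where λ := (I − B)^{-1}·C. In particular λ_{ii} ≥ π_i > 0 for every i. -/

import Mathlib

/-- Agent `i` reaches agent `j` through `B`: either `i = j`, or there is a path
`k_0 = i, k_1, …, k_m = j` (with `m ≥ 1`) along which all the weights
`B (k_t) (k_{t+1}) = π_{k_t k_{t+1}}` are strictly positive. -/
def Reaches {n : ℕ} (B : Matrix (Fin n) (Fin n) ℝ) (i j : Fin n) : Prop :=
  i = j ∨ ∃ m : ℕ, 1 ≤ m ∧ ∃ k : Fin (m + 1) → Fin n, k 0 = i ∧ k (Fin.last m) = j ∧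
    ∀ t : Fin m, 0 < B (k t.castSucc) (k t.succ)

/-!
Write `N = (1 - B)⁻¹`. A discrete minimum principle shows that `(1 - B) x ≥ 0` forces `x ≥ 0`:
at a coordinate `i` where `x` is minimal, `((1 - B) x)ᵢ ≥ (1 - ∑ⱼ Bᵢⱼ) xᵢ`, and
`1 - ∑ⱼ Bᵢⱼ > 0`. This makes `1 - B` invertible and `N ≥ 0` entrywise. From `N = 1 + B N`
one gets `Bᵐ ≤ N` entrywise for every `m`, and a path of length `m` from `i` to
`j` with positive weights makes `(Bᵐ)ᵢⱼ > 0`. Finally `λᵢⱼ = Nᵢⱼ πⱼ`.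
-/

open Matrix

namespace Matrix

section Substochastic

variable {ι R : Type*} [Fintype ι] [DecidableEq ι] [Field R] [LinearOrder R]
  [IsStrictOrderedRing R] {B : Matrix ι ι R}

theorem nonneg_of_one_sub_mulVec_nonneg (hB : ∀ i j, 0 ≤ B i j) (hrow : ∀ i, ∑ j, B i j < 1)
    {x : ι → R} (hx : 0 ≤ (1 - B) *ᵥ x) : 0 ≤ x := by
  by_contra hneg
  obtain ⟨i, hi⟩ : ∃ i, x i < 0 := by simpa [Pi.le_def] using hneg
  have : Nonempty ι := ⟨i⟩
  obtain ⟨i₀, hmin⟩ := Finite.exists_min x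
  have hx₀ : x i₀ < 0 := (hmin i).trans_lt hi
  have hsum : (∑ j, B i₀ j) * x i₀ ≤ ∑ j, B i₀ j * x j := by
    rw [Finset.sum_mul]
    exact Finset.sum_le_sum fun j _ => mul_le_mul_of_nonneg_left (hmin j) (hB i₀ j)
  have hval : ((1 - B) *ᵥ x) i₀ = x i₀ - ∑ j, B i₀ j * x j := by
    rw [sub_mulVec, one_mulVec]
    rfl
  have hx_at : 0 ≤ x i₀ - ∑ j, B i₀ j * x j := hval ▸ hx i₀
  nlinarith [hrow i₀]

theorem isUnit_det_one_sub (hB : ∀ i j, 0 ≤ B i j) (hrow : ∀ i, ∑ j, B i j < 1) :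
    IsUnit (1 - B).det := by
  refine isUnit_iff_ne_zero.2 fun hdet => ?_
  obtain ⟨v, hv, hker⟩ := exists_mulVec_eq_zero_iff.2 hdet
  have hpos : 0 ≤ v := nonneg_of_one_sub_mulVec_nonneg hB hrow (by rw [hker])
  have hneg : 0 ≤ -v :=
    nonneg_of_one_sub_mulVec_nonneg hB hrow (by rw [mulVec_neg, hker, neg_zero])
  exact hv (le_antisymm (neg_nonneg.1 hneg) hpos)

theorem nonneg_of_one_sub_mul_nonneg (hB : ∀ i j, 0 ≤ B i j) (hrow : ∀ i, ∑ j, B i j < 1)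
    {X : Matrix ι ι R} (hX : ∀ i j, 0 ≤ ((1 - B) * X) i j) (i j : ι) : 0 ≤ X i j :=
  nonneg_of_one_sub_mulVec_nonneg hB hrow (x := fun k => X k j) (fun k => hX k j) i

theorem inv_one_sub_apply_nonneg (hB : ∀ i j, 0 ≤ B i j) (hrow : ∀ i, ∑ j, B i j < 1) :
    ∀ i j, 0 ≤ (1 - B)⁻¹ i j :=
  nonneg_of_one_sub_mul_nonneg hB hrow fun i j => by
    rw [mul_nonsing_inv _ (isUnit_det_one_sub hB hrow), one_apply]
    split_ifs <;> norm_num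

theorem inv_one_sub_eq_one_add_mul (hB : ∀ i j, 0 ≤ B i j) (hrow : ∀ i, ∑ j, B i j < 1) :
    (1 - B)⁻¹ = 1 + B * (1 - B)⁻¹ := by
  have := mul_nonsing_inv _ (isUnit_det_one_sub hB hrow)
  rw [sub_mul, one_mul, sub_eq_iff_eq_add] at this
  exact this

theorem pow_apply_le_inv_one_sub_apply (hB : ∀ i j, 0 ≤ B i j) (hrow : ∀ i, ∑ j, B i j < 1)
    (m : ℕ) (i j : ι) : (B ^ m) i j ≤ (1 - B)⁻¹ i j := by
  have hN := inv_one_sub_eq_one_add_mul hB hrow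
  have hBN : ∀ i j, (B * (1 - B)⁻¹) i j ≤ (1 - B)⁻¹ i j := fun i j => by
    conv_rhs => rw [hN]
    rw [add_apply, le_add_iff_nonneg_left, one_apply]
    split_ifs <;> norm_num
  induction m generalizing i with
  | zero =>
    rw [pow_zero, hN, add_apply, le_add_iff_nonneg_right, mul_apply]
    exact Finset.sum_nonneg fun k _ => mul_nonneg (hB i k) (inv_one_sub_apply_nonneg hB hrow k j)
  | succ m ih =>
    calc (B ^ (m + 1)) i j = ∑ k, B i k * (B ^ m) k j := by rw [pow_succ', mul_apply]
      _ ≤ ∑ k, B i k * (1 - B)⁻¹ k j :=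
        Finset.sum_le_sum fun k _ => mul_le_mul_of_nonneg_left (ih k) (hB i k)
      _ ≤ (1 - B)⁻¹ i j := hBN i j

end Substochastic

theorem pow_apply_pos_of_chain {ι R : Type*} [Fintype ι] [DecidableEq ι] [Semiring R]
    [PartialOrder R] [IsStrictOrderedRing R] {B : Matrix ι ι R} (hB : ∀ i j, 0 ≤ B i j) :
    ∀ {m : ℕ} (k : Fin (m + 1) → ι), (∀ t : Fin m, 0 < B (k t.castSucc) (k t.succ)) →
      0 < (B ^ m) (k 0) (k (Fin.last m))
  | 0, _, _ => by simp
  | m + 1, k, hk => by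
    have hhead : 0 < B (k 0) (k 1) := hk 0
    have htail : 0 < (B ^ m) (k 1) (k (Fin.last (m + 1))) :=
      pow_apply_pos_of_chain hB (fun t => k t.succ) fun t => by
        simpa only [Fin.succ_castSucc] using hk t.succ
    rw [pow_succ', mul_apply]
    exact Finset.sum_pos' (fun l _ => mul_nonneg (hB _ _) (pow_apply_nonneg hB _ _ _))
      ⟨k 1, Finset.mem_univ _, mul_pos hhead htail⟩

end Matrix

theorem Reaches.exists_pow_apply_pos {n : ℕ} {B : Matrix (Fin n) (Fin n) ℝ}
    (hB : ∀ i j, 0 ≤ B i j) {i j : Fin n} (h : Reaches B i j) : ∃ m, 0 < (B ^ m) i j := by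
  rcases h with rfl | ⟨m, -, k, rfl, rfl, hk⟩
  · exact ⟨0, by simp⟩
  · exact ⟨m, pow_apply_pos_of_chain hB k hk⟩

theorem lambda_pos_of_reaches_general (n : ℕ)
    (B : Matrix (Fin n) (Fin n) ℝ) (hB : ∀ i j, 0 ≤ B i j)
    (hrow : ∀ i, ∑ j, B i j < 1) :
    (∀ i j : Fin n, Reaches B i j →
      0 < ((1 - B)⁻¹ * Matrix.diagonal (fun i => 1 - ∑ j, B i j)) i j) ∧
    ∀ i : Fin n,
      1 - ∑ j, B i j ≤ ((1 - B)⁻¹ * Matrix.diagonal (fun i => 1 - ∑ j, B i j)) i i := by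
  have hπ : ∀ i, 0 < 1 - ∑ j, B i j := fun i => sub_pos.2 (hrow i)
  simp only [mul_diagonal]
  refine ⟨fun i j hij => ?_, fun i => ?_⟩
  · obtain ⟨m, hm⟩ := hij.exists_pow_apply_pos hB
    exact mul_pos (hm.trans_le (pow_apply_le_inv_one_sub_apply hB hrow m i j)) (hπ j)
  · have hdiag := pow_apply_le_inv_one_sub_apply hB hrow 0 i i
    rw [pow_zero, one_apply_eq] at hdiag
    exact le_mul_of_one_le_left (hπ i).le hdiag

theorem lambda_pos_of_reaches (n : ℕ) (hn : 0 < n)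
    (B : Matrix (Fin n) (Fin n) ℝ) (hB : ∀ i j, 0 ≤ B i j)
    (hrow : ∀ i, ∑ j, B i j < 1) :
    (∀ i j : Fin n, Reaches B i j →
      0 < ((1 - B)⁻¹ * Matrix.diagonal (fun i => 1 - ∑ j, B i j)) i j) ∧
    ∀ i : Fin n,
      1 - ∑ j, B i j ≤ ((1 - B)⁻¹ * Matrix.diagonal (fun i => 1 - ∑ j, B i j)) i i :=
  lambda_pos_of_reaches_general n B hB hrow
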